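/- (First isomorphism theorem for Hom-groups) Let H be a Hom-subgroup and N a Hom-normal subgroup of a Hom-group G. Then N ∩ H is a Hom-normal subgroup of H, N is a Hom-normal subgroup of NH, and H/(N ∩ H) ≅ NH/N as Hom-groups. -/
import Mathlib


/-- A Hom-group: a set with binary operation `op`, bijective multiplicative
twisting map `al` satisfying Hom-associativity, unit and two-sided inverses. -/
structure HomGroup (G : Type*) where
  op : G → G → G
  al : G → G
  one : G
  inv : G → G
  al_bij : Function.Bijective al
  al_op : ∀ g h, al (op g h) = op (al g) (al h)
  assoc : ∀ g h k, op (al g) (op h k) = op (op g h) (al k)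
  op_one : ∀ g, op g one = al g
  one_op : ∀ g, op one g = al g
  op_inv : ∀ g, op g (inv g) = one
  inv_op : ∀ g, op (inv g) g = one

/-- A Hom-monoid: Hom-semigroup with a (two-sided Hom-)unit. -/
structure HomMonoid (G : Type*) where
  op : G → G → G
  al : G → G
  one : G
  al_bij : Function.Bijective al
  al_op : ∀ g h, al (op g h) = op (al g) (al h)
  assoc : ∀ g h k, op (al g) (op h k) = op (op g h) (al k)
  op_one : ∀ g, op g one = al g
  one_op : ∀ g, op one g = al g

/-- A Hom-semigroup. -/
structure HomSemigroup (G : Type*) where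
  op : G → G → G
  al : G → G
  al_bij : Function.Bijective al
  al_op : ∀ g h, al (op g h) = op (al g) (al h)
  assoc : ∀ g h k, op (al g) (op h k) = op (op g h) (al k)

/-- `S` is a Hom-subgroup of the Hom-group `G0`: nonempty, closed under the
product and under `al` (with `al` restricting to a bijection of `S`), and
`(S, al|_S)` is itself a Hom-group, i.e. it has a unit and inverses. -/
structure IsHomSubgroup {G : Type*} (G0 : HomGroup G) (S : Set G) : Prop where
  nonempty : S.Nonempty
  op_mem : ∀ a ∈ S, ∀ b ∈ S, G0.op a b ∈ S
  al_mem : ∀ a ∈ S, G0.al a ∈ S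
  al_surjOn : ∀ a ∈ S, ∃ b ∈ S, G0.al b = a
  exists_unit : ∃ e ∈ S, (∀ a ∈ S, G0.op a e = G0.al a ∧ G0.op e a = G0.al a) ∧
    ∀ a ∈ S, ∃ b ∈ S, G0.op a b = e ∧ G0.op b a = e

/-- The left Hom-coset `aS`. -/
def leftCoset {G : Type*} (G0 : HomGroup G) (a : G) (S : Set G) : Set G :=
  {x | ∃ h ∈ S, x = G0.op a h}

/-- The right Hom-coset `Sa`. -/
def rightCoset {G : Type*} (G0 : HomGroup G) (a : G) (S : Set G) : Set G :=
  {x | ∃ h ∈ S, x = G0.op h a}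


section Aux
variable {G : Type*} (G0 : HomGroup G)

theorem hg_al_inj : Function.Injective G0.al := G0.al_bij.1

theorem hg_cancel_left (a : G) {b c : G} (h : G0.op a b = G0.op a c) : b = c := by
  have h1 := G0.assoc (G0.inv a) a b
  have h2 := G0.assoc (G0.inv a) a c
  rw [G0.inv_op, G0.one_op] at h1 h2
  apply hg_al_inj G0; apply hg_al_inj G0
  rw [← h1, ← h2, h]

theorem hg_cancel_right (a : G) {b c : G} (h : G0.op b a = G0.op c a) : b = c := by
  have h1 := G0.assoc b a (G0.inv a)
  have h2 := G0.assoc c a (G0.inv a)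
  rw [G0.op_inv, G0.op_one] at h1 h2
  apply hg_al_inj G0; apply hg_al_inj G0
  rw [h1, h2, h]

theorem hg_al_one : G0.al G0.one = G0.one := by
  apply hg_cancel_left G0 (G0.al G0.one)
  rw [G0.op_one, ← G0.al_op, G0.op_one]

noncomputable def hg_be {G : Type*} (G0 : HomGroup G) : G → G :=
  @Function.invFun _ _ ⟨G0.one⟩ G0.al

theorem hg_al_be (x : G) : G0.al (hg_be G0 x) = x :=
  @Function.rightInverse_invFun _ _ ⟨G0.one⟩ _ G0.al_bij.2 x

theorem hg_be_al (x : G) : hg_be G0 (G0.al x) = x :=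
  @Function.leftInverse_invFun _ _ ⟨G0.one⟩ _ G0.al_bij.1 x

theorem hg_be_op (x y : G) :
    hg_be G0 (G0.op x y) = G0.op (hg_be G0 x) (hg_be G0 y) := by
  apply hg_al_inj G0
  rw [hg_al_be, G0.al_op, hg_al_be, hg_al_be]

theorem hg_be_one : hg_be G0 G0.one = G0.one := by
  have := hg_be_al G0 G0.one
  rwa [hg_al_one] at this

theorem hg_inv_eq_of {a b : G} (h : G0.op a b = G0.one) : b = G0.inv a :=
  hg_cancel_left G0 a (by rw [h, G0.op_inv])

theorem hg_inv_eq_of' {a b : G} (h : G0.op b a = G0.one) : b = G0.inv a :=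
  hg_cancel_right G0 a (by rw [h, G0.inv_op])

theorem hg_al_inv (a : G) : G0.al (G0.inv a) = G0.inv (G0.al a) := by
  apply hg_inv_eq_of
  rw [← G0.al_op, G0.op_inv, hg_al_one]

theorem hg_op_op_inv (a b : G) :
    G0.op (G0.op a b) (G0.op (G0.inv b) (G0.inv a)) = G0.one := by
  have hab : G0.op a b = G0.al (G0.op (hg_be G0 a) (hg_be G0 b)) := by
    rw [G0.al_op, hg_al_be, hg_al_be]
  rw [hab, G0.assoc]
  have hinner : G0.op (G0.op (hg_be G0 a) (hg_be G0 b)) (G0.inv b) = G0.al a := by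
    have hb : G0.inv b = G0.al (G0.inv (hg_be G0 b)) := by
      rw [hg_al_inv, hg_al_be]
    rw [hb, ← G0.assoc, G0.op_inv, G0.op_one, hg_al_be]
  rw [hinner, ← G0.al_op, G0.op_inv, hg_al_one]

theorem hg_inv_op_eq (a b : G) :
    G0.inv (G0.op a b) = G0.op (G0.inv b) (G0.inv a) :=
  (hg_inv_eq_of G0 (hg_op_op_inv G0 a b)).symm

variable {S : Set G}

theorem hs_one_mem (hS : IsHomSubgroup G0 S) : G0.one ∈ S := by
  obtain ⟨e, he, hu, _⟩ := hS.exists_unit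
  have hee : G0.op e e = G0.al e := (hu e he).1
  have h1 := G0.assoc e e (G0.inv e)
  rw [G0.op_inv, G0.op_one, hee, ← G0.al_op, G0.op_inv, hg_al_one] at h1
  have : e = G0.one := by
    apply hg_al_inj G0; apply hg_al_inj G0
    rw [h1, hg_al_one, hg_al_one]
  rwa [this] at he

theorem hs_inv_exists (hS : IsHomSubgroup G0 S) {a : G} (ha : a ∈ S) :
    ∃ b ∈ S, G0.op a b = G0.one ∧ G0.op b a = G0.one := by
  obtain ⟨e, he, hu, hi⟩ := hS.exists_unit
  have hee : G0.op e e = G0.al e := (hu e he).1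
  have h1 := G0.assoc e e (G0.inv e)
  rw [G0.op_inv, G0.op_one, hee, ← G0.al_op, G0.op_inv, hg_al_one] at h1
  have heone : e = G0.one := by
    apply hg_al_inj G0; apply hg_al_inj G0
    rw [h1, hg_al_one, hg_al_one]
  obtain ⟨b, hb, h2, h3⟩ := hi a ha
  exact ⟨b, hb, by rwa [heone] at h2, by rwa [heone] at h3⟩

theorem hs_inv_mem (hS : IsHomSubgroup G0 S) {a : G} (ha : a ∈ S) : G0.inv a ∈ S := by
  obtain ⟨b, hb, h2, _⟩ := hs_inv_exists G0 hS ha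
  rwa [← hg_inv_eq_of G0 h2]

theorem hs_be_mem (hS : IsHomSubgroup G0 S) {a : G} (ha : a ∈ S) : hg_be G0 a ∈ S := by
  obtain ⟨b, hb, h⟩ := hS.al_surjOn a ha
  have : hg_be G0 a = b := by rw [← h, hg_be_al]
  rwa [this]

theorem hs_mem_of_al2 (hS : IsHomSubgroup G0 S) {a : G}
    (ha : G0.al (G0.al a) ∈ S) : a ∈ S := by
  have h : hg_be G0 (hg_be G0 (G0.al (G0.al a))) = a := by rw [hg_be_al, hg_be_al]
  have := hs_be_mem G0 hS (hs_be_mem G0 hS ha)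
  rwa [h] at this

theorem hg_coset_sub (hS : IsHomSubgroup G0 S) {a b : G}
    (hab : ∃ n ∈ S, G0.al a = G0.op b n) :
    leftCoset G0 a S ⊆ leftCoset G0 b S := by
  obtain ⟨n₀, hn₀, he⟩ := hab
  have ha2 : a = G0.op (hg_be G0 b) (hg_be G0 n₀) := by
    have := congrArg (hg_be G0) he
    rwa [hg_be_al, hg_be_op] at this
  rintro x ⟨m, hm, rfl⟩
  refine ⟨G0.op (hg_be G0 n₀) (hg_be G0 m),
    hS.op_mem _ (hs_be_mem G0 hS hn₀) _ (hs_be_mem G0 hS hm), ?_⟩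
  have h3 := G0.assoc (hg_be G0 b) (hg_be G0 n₀) (hg_be G0 m)
  rw [hg_al_be, hg_al_be] at h3
  rw [ha2, ← h3]

theorem hg_coset_rev (hS : IsHomSubgroup G0 S) {a b : G}
    (hab : ∃ n ∈ S, G0.al a = G0.op b n) :
    ∃ n ∈ S, G0.al b = G0.op a n := by
  obtain ⟨n₀, hn₀, he⟩ := hab
  have ha2 : a = G0.op (hg_be G0 b) (hg_be G0 n₀) := by
    have := congrArg (hg_be G0) he
    rwa [hg_be_al, hg_be_op] at this
  refine ⟨G0.inv n₀, hs_inv_mem G0 hS hn₀, ?_⟩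
  have h3 := G0.assoc (hg_be G0 b) (hg_be G0 n₀) (G0.inv (hg_be G0 n₀))
  rw [G0.op_inv, G0.op_one, hg_al_be, hg_al_inv, hg_al_be] at h3
  rw [h3, ha2]

theorem hg_coset_eq_iff (hS : IsHomSubgroup G0 S) {a b : G} :
    leftCoset G0 a S = leftCoset G0 b S ↔ ∃ n ∈ S, G0.al a = G0.op b n := by
  constructor
  · intro h
    have hmem : G0.al a ∈ leftCoset G0 a S :=
      ⟨G0.one, hs_one_mem G0 hS, (G0.op_one a).symm⟩
    rw [h] at hmem
    exact hmem
  · intro h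
    exact Set.Subset.antisymm (hg_coset_sub G0 hS h)
      (hg_coset_sub G0 hS (hg_coset_rev G0 hS h))

end Aux

/-- First isomorphism theorem for Hom-groups: `N ∩ H` is Hom-normal in `H`,
`N` is Hom-normal in `NH`, and `H/(N ∩ H) ≅ NH/N`. -/
theorem homGroup_first_iso {G : Type*} (G0 : HomGroup G) (H N : Set G)
    (hH : IsHomSubgroup G0 H) (hN : IsHomSubgroup G0 N)
    (hnorm : ∀ g : G, leftCoset G0 g N = rightCoset G0 g N) :
    (IsHomSubgroup G0 (N ∩ H) ∧
      ∀ g ∈ H, leftCoset G0 g (N ∩ H) = rightCoset G0 g (N ∩ H)) ∧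
    (N ⊆ Set.image2 G0.op N H ∧ IsHomSubgroup G0 (Set.image2 G0.op N H) ∧
      ∀ g ∈ Set.image2 G0.op N H, leftCoset G0 g N = rightCoset G0 g N) ∧
    ∃ φ : {T : Set G // ∃ a ∈ H, T = leftCoset G0 a (N ∩ H)} →
        {T : Set G // ∃ a ∈ Set.image2 G0.op N H, T = leftCoset G0 a N},
      Function.Bijective φ ∧
      ∀ a : G, ∀ ha : a ∈ H,
        (φ ⟨leftCoset G0 a (N ∩ H), a, ha, rfl⟩).1 = leftCoset G0 a N := by
  classical
  have h1N : G0.one ∈ N := hs_one_mem G0 hN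
  have h1H : G0.one ∈ H := hs_one_mem G0 hH
  have norm1 : ∀ g : G, ∀ n ∈ N, ∃ m ∈ N, G0.op g n = G0.op m g := by
    intro g n hn
    have hx : G0.op g n ∈ leftCoset G0 g N := ⟨n, hn, rfl⟩
    rw [hnorm g] at hx
    exact hx
  have norm2 : ∀ g : G, ∀ n ∈ N, ∃ m ∈ N, G0.op n g = G0.op g m := by
    intro g n hn
    have hx : G0.op n g ∈ rightCoset G0 g N := ⟨n, hn, rfl⟩
    rw [← hnorm g] at hx
    exact hx
  have hNH_sub : IsHomSubgroup G0 (N ∩ H) := by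
    constructor
    · exact ⟨G0.one, h1N, h1H⟩
    · rintro a ⟨haN, haH⟩ b ⟨hbN, hbH⟩
      exact ⟨hN.op_mem a haN b hbN, hH.op_mem a haH b hbH⟩
    · rintro a ⟨haN, haH⟩
      exact ⟨hN.al_mem a haN, hH.al_mem a haH⟩
    · rintro a ⟨haN, haH⟩
      exact ⟨hg_be G0 a, ⟨hs_be_mem G0 hN haN, hs_be_mem G0 hH haH⟩, hg_al_be G0 a⟩
    · refine ⟨G0.one, ⟨h1N, h1H⟩, fun a _ => ⟨G0.op_one a, G0.one_op a⟩, ?_⟩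
      rintro a ⟨haN, haH⟩
      exact ⟨G0.inv a, ⟨hs_inv_mem G0 hN haN, hs_inv_mem G0 hH haH⟩,
        G0.op_inv a, G0.inv_op a⟩
  have part1b : ∀ g ∈ H, leftCoset G0 g (N ∩ H) = rightCoset G0 g (N ∩ H) := by
    intro g hg
    ext x
    constructor
    · rintro ⟨n, ⟨hnN, hnH⟩, rfl⟩
      obtain ⟨m, hmN, hm⟩ := norm1 g n hnN
      have hmH : m ∈ H := by
        apply hs_mem_of_al2 G0 hH
        have h2 : G0.op (G0.op m g) (G0.al (G0.inv g)) = G0.al (G0.al m) := by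
          rw [← G0.assoc, G0.op_inv, G0.op_one]
        rw [← h2, ← hm]
        exact hH.op_mem _ (hH.op_mem g hg n hnH) _ (hH.al_mem _ (hs_inv_mem G0 hH hg))
      exact ⟨m, ⟨hmN, hmH⟩, hm⟩
    · rintro ⟨n, ⟨hnN, hnH⟩, rfl⟩
      obtain ⟨m, hmN, hm⟩ := norm2 g n hnN
      have hmH : m ∈ H := by
        apply hs_mem_of_al2 G0 hH
        have h2 : G0.op (G0.al (G0.inv g)) (G0.op g m) = G0.al (G0.al m) := by
          rw [G0.assoc, G0.inv_op, G0.one_op]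
        rw [← h2, ← hm]
        exact hH.op_mem _ (hH.al_mem _ (hs_inv_mem G0 hH hg)) _ (hH.op_mem n hnH g hg)
      exact ⟨m, ⟨hmN, hmH⟩, hm⟩
  have hNsub : N ⊆ Set.image2 G0.op N H := by
    intro n hn
    exact ⟨hg_be G0 n, hs_be_mem G0 hN hn, G0.one, h1H, by rw [G0.op_one, hg_al_be]⟩
  have hHsub : H ⊆ Set.image2 G0.op N H := by
    intro h hh
    exact ⟨G0.one, h1N, hg_be G0 h, hs_be_mem G0 hH hh, by rw [G0.one_op, hg_al_be]⟩
  have hNHgrp : IsHomSubgroup G0 (Set.image2 G0.op N H) := by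
    constructor
    · exact ⟨G0.one, hNsub h1N⟩
    · rintro a ⟨n₁, hn₁, h₁, hh₁, rfl⟩ b ⟨n₂, hn₂, h₂, hh₂, rfl⟩
      have e1 := G0.assoc (G0.op (hg_be G0 n₁) (hg_be G0 h₁)) n₂ h₂
      rw [G0.al_op, hg_al_be G0 n₁, hg_al_be G0 h₁] at e1
      have e2 := G0.assoc (hg_be G0 n₁) (hg_be G0 h₁) (hg_be G0 n₂)
      rw [hg_al_be G0 n₁, hg_al_be G0 n₂] at e2
      obtain ⟨m, hm, hm2⟩ := norm1 (hg_be G0 h₁) (hg_be G0 n₂) (hs_be_mem G0 hN hn₂)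
      have e3 := G0.assoc (hg_be G0 n₁) m (hg_be G0 h₁)
      rw [hg_al_be G0 n₁, hg_al_be G0 h₁] at e3
      have e4 := G0.assoc (G0.op (hg_be G0 n₁) m) h₁ h₂
      have final : G0.op (G0.op n₁ h₁) (G0.op n₂ h₂)
          = G0.op (G0.al (G0.op (hg_be G0 n₁) m)) (G0.op h₁ h₂) := by
        rw [e1, ← e2, hm2, e3, ← e4]
      rw [final]
      exact ⟨_, hN.al_mem _ (hN.op_mem _ (hs_be_mem G0 hN hn₁) m hm),
        _, hH.op_mem h₁ hh₁ h₂ hh₂, rfl⟩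
    · rintro a ⟨n, hn, h, hh, rfl⟩
      exact ⟨G0.al n, hN.al_mem n hn, G0.al h, hH.al_mem h hh, (G0.al_op n h).symm⟩
    · rintro a ⟨n, hn, h, hh, rfl⟩
      refine ⟨G0.op (hg_be G0 n) (hg_be G0 h),
        ⟨hg_be G0 n, hs_be_mem G0 hN hn, hg_be G0 h, hs_be_mem G0 hH hh, rfl⟩, ?_⟩
      rw [G0.al_op, hg_al_be, hg_al_be]
    · refine ⟨G0.one, hNsub h1N, fun a _ => ⟨G0.op_one a, G0.one_op a⟩, ?_⟩
      rintro a ⟨n, hn, h, hh, rfl⟩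
      refine ⟨G0.inv (G0.op n h), ?_, G0.op_inv _, G0.inv_op _⟩
      rw [hg_inv_op_eq G0 n h]
      have hx : G0.op (G0.inv h) (G0.inv n) ∈ leftCoset G0 (G0.inv h) N :=
        ⟨G0.inv n, hs_inv_mem G0 hN hn, rfl⟩
      rw [hnorm] at hx
      obtain ⟨m, hm, hm2⟩ := hx
      exact ⟨m, hm, G0.inv h, hs_inv_mem G0 hH hh, hm2.symm⟩
  have key : ∀ a ∈ H, ∀ b ∈ H,
      (leftCoset G0 a (N ∩ H) = leftCoset G0 b (N ∩ H) ↔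
        leftCoset G0 a N = leftCoset G0 b N) := by
    intro a ha b hb
    rw [hg_coset_eq_iff G0 hNH_sub, hg_coset_eq_iff G0 hN]
    constructor
    · rintro ⟨n, ⟨hnN, _⟩, he⟩
      exact ⟨n, hnN, he⟩
    · rintro ⟨n, hnN, he⟩
      have hnH : n ∈ H := by
        apply hs_mem_of_al2 G0 hH
        have h2 : G0.op (G0.al (G0.inv b)) (G0.op b n) = G0.al (G0.al n) := by
          rw [G0.assoc, G0.inv_op, G0.one_op]
        rw [← h2, ← he]
        exact hH.op_mem _ (hH.al_mem _ (hs_inv_mem G0 hH hb)) _ (hH.al_mem a ha)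
      exact ⟨n, ⟨hnN, hnH⟩, he⟩
  have keyNH : ∀ c ∈ Set.image2 G0.op N H,
      ∃ b ∈ H, leftCoset G0 c N = leftCoset G0 b N := by
    rintro c ⟨n, hn, h, hh, rfl⟩
    refine ⟨G0.al h, hH.al_mem h hh, ?_⟩
    rw [hg_coset_eq_iff G0 hN]
    have hx : G0.op (G0.al n) (G0.al h) ∈ rightCoset G0 (G0.al h) N :=
      ⟨G0.al n, hN.al_mem n hn, rfl⟩
    rw [← hnorm] at hx
    obtain ⟨m, hm, hm2⟩ := hx
    exact ⟨m, hm, by rw [G0.al_op, hm2]⟩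
  have hval : ∀ (a : G), a ∈ H →
      ∀ (hT : ∃ b ∈ H, leftCoset G0 a (N ∩ H) = leftCoset G0 b (N ∩ H)),
      leftCoset G0 hT.choose N = leftCoset G0 a N := by
    intro a ha hT
    have h1 := hT.choose_spec
    exact (key hT.choose h1.1 a ha).mp h1.2.symm
  refine ⟨⟨hNH_sub, part1b⟩, ⟨hNsub, hNHgrp, fun g _ => hnorm g⟩, ?_⟩
  refine ⟨fun T => ⟨leftCoset G0 T.2.choose N, T.2.choose, hHsub T.2.choose_spec.1, rfl⟩,
    ⟨?_, ?_⟩, ?_⟩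
  · -- injective
    intro T₁ T₂ hφ
    have h' : leftCoset G0 T₁.2.choose N = leftCoset G0 T₂.2.choose N :=
      congrArg Subtype.val hφ
    have s₁ := T₁.2.choose_spec
    have s₂ := T₂.2.choose_spec
    apply Subtype.ext
    rw [s₁.2, s₂.2]
    exact (key T₁.2.choose s₁.1 T₂.2.choose s₂.1).mpr h'
  · -- surjective
    rintro ⟨T, hT⟩
    obtain ⟨c, hc, hTeq⟩ := hT
    obtain ⟨b, hb, hcb⟩ := keyNH c hc
    refine ⟨⟨leftCoset G0 b (N ∩ H), b, hb, rfl⟩, ?_⟩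
    apply Subtype.ext
    exact (hval b hb _).trans (hcb.symm.trans hTeq.symm)
  · -- spec
    intro a ha
    exact hval a ha _
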